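/- arXiv:0912.3709 — 4 statements merged into one kernel-verified Lean document; each statement's English description precedes it below -/
import Mathlib

section
/- Consider the planar system u' = μ₂u + c(9u² + 14v²) + d₁u(u²+2v²) + d₂u(u² - (26/7)v²), v' = μ₂v + 14cuv + d₁v(u²+2v²) + d₂v(-(13/7)u² + (30/7)v²). Any equilibrium with v ≠ 0 and v² ≠ (5/14)u² (i.e. off the invariant axes) satisfies u = 7c/(4d₂) and μ₂ = -(7c²/(16d₂²))(7d₁ + 43d₂) - (2d₁ + (30/7)d₂)v², provided d₂ ≠ 0. -/
/-!
Off `v = 0` the second equation can be divided by `v`, which expresses `μ₂` in terms of `u, v`.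
Eliminating `μ₂` from the first equation leaves `(4 d₂ u - 7 c) (5 u² - 14 v²) = 0`, and the
second factor vanishes exactly on the cubic axes `v = ±√(5/14) u`.
-/

section Equilibria

variable {μ₂ c d₁ d₂ u v : ℝ}

lemma reduced_v_equation_of_ne_zero
    (hv : μ₂ * v + 14 * c * u * v + d₁ * v * (u ^ 2 + 2 * v ^ 2)
          + d₂ * v * (-(13 / 7) * u ^ 2 + (30 / 7) * v ^ 2) = 0)
    (hv0 : v ≠ 0) :
    μ₂ + 14 * c * u + d₁ * (u ^ 2 + 2 * v ^ 2)
      + d₂ * (-(13 / 7) * u ^ 2 + (30 / 7) * v ^ 2) = 0 := by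
  have hfactored : v * (μ₂ + 14 * c * u + d₁ * (u ^ 2 + 2 * v ^ 2)
      + d₂ * (-(13 / 7) * u ^ 2 + (30 / 7) * v ^ 2)) = 0 := by
    linear_combination hv
  exact (mul_eq_zero.mp hfactored).resolve_left hv0

lemma linear_mul_cubic_axes_eq_zero
    (hu : μ₂ * u + c * (9 * u ^ 2 + 14 * v ^ 2) + d₁ * u * (u ^ 2 + 2 * v ^ 2)
          + d₂ * u * (u ^ 2 - (26 / 7) * v ^ 2) = 0)
    (hg : μ₂ + 14 * c * u + d₁ * (u ^ 2 + 2 * v ^ 2)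
      + d₂ * (-(13 / 7) * u ^ 2 + (30 / 7) * v ^ 2) = 0) :
    (4 * d₂ * u - 7 * c) * (5 * u ^ 2 - 14 * v ^ 2) = 0 := by
  linear_combination 7 * hu - 7 * u * hg

lemma mu_eq_of_reduced_v_equation (hd₂ : d₂ ≠ 0) (hU : u = 7 * c / (4 * d₂))
    (hg : μ₂ + 14 * c * u + d₁ * (u ^ 2 + 2 * v ^ 2)
      + d₂ * (-(13 / 7) * u ^ 2 + (30 / 7) * v ^ 2) = 0) :
    μ₂ = -(7 * c ^ 2 / (16 * d₂ ^ 2)) * (7 * d₁ + 43 * d₂)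
         - (2 * d₁ + (30 / 7) * d₂) * v ^ 2 := by
  rw [hU] at hg
  field_simp at hg ⊢
  linear_combination hg

end Equilibria

/-- Equilibria of the `Fix(D₄⊕Z₂ᶜ)` planar system off the invariant axes satisfy
`u = 7c/(4d₂)` and the stated relation for `μ₂`. -/
theorem stmt_4 (μ₂ c d₁ d₂ u v : ℝ) (hd₂ : d₂ ≠ 0)
    (hu : μ₂ * u + c * (9 * u ^ 2 + 14 * v ^ 2) + d₁ * u * (u ^ 2 + 2 * v ^ 2)
          + d₂ * u * (u ^ 2 - (26 / 7) * v ^ 2) = 0)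
    (hv : μ₂ * v + 14 * c * u * v + d₁ * v * (u ^ 2 + 2 * v ^ 2)
          + d₂ * v * (-(13 / 7) * u ^ 2 + (30 / 7) * v ^ 2) = 0)
    (hv0 : v ≠ 0) (hoff : v ^ 2 ≠ (5 / 14) * u ^ 2) :
    u = 7 * c / (4 * d₂) ∧
    μ₂ = -(7 * c ^ 2 / (16 * d₂ ^ 2)) * (7 * d₁ + 43 * d₂)
         - (2 * d₁ + (30 / 7) * d₂) * v ^ 2 := by
  have hg := reduced_v_equation_of_ne_zero hv hv0
  have hoff' : 5 * u ^ 2 - 14 * v ^ 2 ≠ 0 := fun h => hoff (by linarith)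
  have hlin : 4 * d₂ * u - 7 * c = 0 :=
    (mul_eq_zero.mp (linear_mul_cubic_axes_eq_zero hu hg)).resolve_right hoff'
  have hU : u = 7 * c / (4 * d₂) := by
    rw [eq_div_iff (mul_ne_zero four_ne_zero hd₂)]
    linarith
  exact ⟨hU, mu_eq_of_reduced_v_equation hd₂ hU hg⟩
end

section
/- The lines v = ±√(5/14)·u are invariant under the planar flow u' = μ₂u + c(9u²+14v²) + d₁u(u²+2v²) + d₂u(u²-(26/7)v²), v' = μ₂v + 14cuv + d₁v(u²+2v²) + d₂v(-(13/7)u²+(30/7)v²); that is, if v = √(5/14)u then v' = √(5/14)u', and similarly for the minus sign. -/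
/-! On the line `v = k u` the `μ₂`- and `d₁`-terms of `v' - k u'` cancel identically, and what is
left factors as `k u² (14 k² - 5) ((4/7) d₂ u - c)`, so the line is invariant for all parameter values exactly when
`k² = 5/14`. -/

noncomputable section

namespace CubicAxes

variable (μ₂ c d₁ d₂ : ℝ)

def fieldU (u v : ℝ) : ℝ :=
  μ₂ * u + c * (9 * u ^ 2 + 14 * v ^ 2) + d₁ * u * (u ^ 2 + 2 * v ^ 2)
    + d₂ * u * (u ^ 2 - (26 / 7) * v ^ 2)

def fieldV (u v : ℝ) : ℝ :=
  μ₂ * v + 14 * c * u * v + d₁ * v * (u ^ 2 + 2 * v ^ 2)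
    + d₂ * v * (-(13 / 7) * u ^ 2 + (30 / 7) * v ^ 2)

theorem fieldV_sub_mul_fieldU_on_line (k u : ℝ) :
    fieldV μ₂ c d₁ d₂ u (k * u) - k * fieldU μ₂ c d₁ d₂ u (k * u)
      = k * u ^ 2 * (14 * k ^ 2 - 5) * (4 / 7 * d₂ * u - c) := by
  unfold fieldU fieldV
  ring

theorem fieldV_eq_mul_fieldU_on_line {k : ℝ} (hk : k ^ 2 = 5 / 14) (u : ℝ) :
    fieldV μ₂ c d₁ d₂ u (k * u) = k * fieldU μ₂ c d₁ d₂ u (k * u) := by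
  have h := fieldV_sub_mul_fieldU_on_line μ₂ c d₁ d₂ k u
  rw [hk] at h
  linarith

end CubicAxes

end

/-- The cubic-symmetry axes `v = ±√(5/14)·u` are invariant under the `Fix(D₄⊕Z₂ᶜ)`
planar vector field. -/
theorem stmt_5 (μ₂ c d₁ d₂ : ℝ) :
    ∀ u v : ℝ,
      (v = Real.sqrt (5 / 14) * u →
        μ₂ * v + 14 * c * u * v + d₁ * v * (u ^ 2 + 2 * v ^ 2)
            + d₂ * v * (-(13 / 7) * u ^ 2 + (30 / 7) * v ^ 2)
          = Real.sqrt (5 / 14) *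
            (μ₂ * u + c * (9 * u ^ 2 + 14 * v ^ 2) + d₁ * u * (u ^ 2 + 2 * v ^ 2)
              + d₂ * u * (u ^ 2 - (26 / 7) * v ^ 2))) ∧
      (v = -(Real.sqrt (5 / 14)) * u →
        μ₂ * v + 14 * c * u * v + d₁ * v * (u ^ 2 + 2 * v ^ 2)
            + d₂ * v * (-(13 / 7) * u ^ 2 + (30 / 7) * v ^ 2)
          = -(Real.sqrt (5 / 14)) *
            (μ₂ * u + c * (9 * u ^ 2 + 14 * v ^ 2) + d₁ * u * (u ^ 2 + 2 * v ^ 2)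
              + d₂ * u * (u ^ 2 - (26 / 7) * v ^ 2))) := by
  have hsq : Real.sqrt (5 / 14) ^ 2 = 5 / 14 := Real.sq_sqrt (by norm_num)
  intro u v
  constructor <;> rintro rfl
  · exact CubicAxes.fieldV_eq_mul_fieldU_on_line μ₂ c d₁ d₂ hsq u
  · exact CubicAxes.fieldV_eq_mul_fieldU_on_line μ₂ c d₁ d₂ (by rwa [neg_sq]) u
end

section
/- The lines w = ±√(10/7)·u are invariant under the planar flow u' = μ₂u + c(9u² - 21w²) + d₁u(u²+2w²) + d₂u(u² - (17/14)w²), w' = μ₂w - 21cuw + d₁w(u²+2w²) + d₂w(-(17/28)u² - (5/56)w²). -/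
/-!
On the line `w = k u` the terms in `μ₂` and `d₁` are radial, i.e. they satisfy `w' = k u'` for
every slope `k`. The remaining `c`- and `d₂`-parts of `w' - k u'` are
`-30 c k u² (1 - (7/10) k²)` and `-(45/28) d₂ k u³ (1 - (7/10) k²)`, which vanish exactly when
`k² = 10/7`.
-/

-- `u'` and `w'` of the planar field on `Fix(D₃ ⊕ Z₂ᶜ)`.
noncomputable def fixFieldU (μ₂ c d₁ d₂ u w : ℝ) : ℝ :=
  μ₂ * u + c * (9 * u ^ 2 - 21 * w ^ 2) + d₁ * u * (u ^ 2 + 2 * w ^ 2)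
    + d₂ * u * (u ^ 2 - (17 / 14) * w ^ 2)

noncomputable def fixFieldW (μ₂ c d₁ d₂ u w : ℝ) : ℝ :=
  μ₂ * w - 21 * c * u * w + d₁ * w * (u ^ 2 + 2 * w ^ 2)
    + d₂ * w * (-(17 / 28) * u ^ 2 - (5 / 56) * w ^ 2)

theorem fixFieldW_eq_mul_fixFieldU_of_sq_eq {k : ℝ} (hk : k ^ 2 = 10 / 7) (μ₂ c d₁ d₂ u : ℝ) :
    fixFieldW μ₂ c d₁ d₂ u (k * u) = k * fixFieldU μ₂ c d₁ d₂ u (k * u) := by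
  unfold fixFieldU fixFieldW
  linear_combination (21 * c * u ^ 2 + (9 / 8) * d₂ * u ^ 3) * k * hk

/-- The cubic-symmetry axes `w = ±√(10/7)·u` are invariant under the `Fix(D₃⊕Z₂ᶜ)`
planar vector field. -/
theorem stmt_6 (μ₂ c d₁ d₂ : ℝ) :
    ∀ u w : ℝ,
      (w = Real.sqrt (10 / 7) * u →
        μ₂ * w - 21 * c * u * w + d₁ * w * (u ^ 2 + 2 * w ^ 2)
            + d₂ * w * (-(17 / 28) * u ^ 2 - (5 / 56) * w ^ 2)
          = Real.sqrt (10 / 7) *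
            (μ₂ * u + c * (9 * u ^ 2 - 21 * w ^ 2) + d₁ * u * (u ^ 2 + 2 * w ^ 2)
              + d₂ * u * (u ^ 2 - (17 / 14) * w ^ 2))) ∧
      (w = -(Real.sqrt (10 / 7)) * u →
        μ₂ * w - 21 * c * u * w + d₁ * w * (u ^ 2 + 2 * w ^ 2)
            + d₂ * w * (-(17 / 28) * u ^ 2 - (5 / 56) * w ^ 2)
          = -(Real.sqrt (10 / 7)) *
            (μ₂ * u + c * (9 * u ^ 2 - 21 * w ^ 2) + d₁ * u * (u ^ 2 + 2 * w ^ 2)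
              + d₂ * u * (u ^ 2 - (17 / 14) * w ^ 2))) := by
  have hsq : Real.sqrt (10 / 7) ^ 2 = 10 / 7 := Real.sq_sqrt (by norm_num)
  intro u w
  constructor <;> rintro rfl
  · exact fixFieldW_eq_mul_fixFieldU_of_sq_eq hsq μ₂ c d₁ d₂ u
  · exact fixFieldW_eq_mul_fixFieldU_of_sq_eq ((neg_sq _).trans hsq) μ₂ c d₁ d₂ u
end

section
/- For the axisymmetric equilibrium α with coordinate y₀ > 0 and c ≥ 0, d₂ < 0: the eigenvalues λ₂^α = -20c·y₀ + (5/2)d₂y₀², λ₃^α = -30c·y₀ - (45/28)d₂y₀², λ₄^α = 5c·y₀ - (20/7)d₂y₀² satisfy λ₂^α < 0 and λ₄^α > 0; consequently α₊ is never stable within the pure ℓ=4 modes. -/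
/-- Eigenvalue signs at the axisymmetric equilibrium `α₊`: if `c ≥ 0`, `d₂ < 0` and
`y₀ > 0` then `lam₂^α < 0` and `lam₄^α > 0`; hence `α₊` is never stable within the pure
`ℓ = 4` modes. -/
theorem stmt_18 (c d₂ y₀ : ℝ) (hc : 0 ≤ c) (hd₂ : d₂ < 0) (hy₀ : 0 < y₀) :
    let lam₂ := -20 * c * y₀ + (5 / 2) * d₂ * y₀ ^ 2
    let lam₄ := 5 * c * y₀ - (20 / 7) * d₂ * y₀ ^ 2
    lam₂ < 0 ∧ lam₄ > 0 := by
  have hcy₀ : 0 ≤ c * y₀ := mul_nonneg hc hy₀.le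
  have hd₂y₀ : d₂ * y₀ ^ 2 < 0 := mul_neg_of_neg_of_pos hd₂ (by positivity)
  constructor <;> linarith
end
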